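/- Let G be a finite group and let R ⊆ gen_m(G) contain exactly one representative of each orbit-equivalence class contained in gen_m(G). Then |gen_m(G)| = Σ_{a ∈ R} ∏_{i=0}^{m−1} λ(A_i^a, A_{i+1}^a), where {A_i^a} are the nested subgroups associated to a. Consequently the probability that m uniformly random elements of G generate G is P_m(G) = |G|^{−m} Σ_{a ∈ R} ∏_{i=0}^{m−1} λ(A_i^a, A_{i+1}^a). -/
import Mathlib


/-- The nested subgroups associated to an `m`-tuple `a`:
`A 0 = ⊥` and `A (i+1) = ⟨A i, a i⟩`. -/
def nestedSubgroup {G : Type*} [Group G] {m : ℕ} (a : Fin m → G) : ℕ → Subgroup G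
  | 0 => ⊥
  | i + 1 =>
      if h : i < m then nestedSubgroup a i ⊔ Subgroup.closure {a ⟨i, h⟩}
      else nestedSubgroup a i

/-- `A` lies in the orbit of `B` under the natural action of `Aut G` on subgroups. -/
def inAutOrbit {G : Type*} [Group G] (A B : Subgroup G) : Prop :=
  ∃ φ : MulAut G, Subgroup.map φ.toMonoidHom B = A

/-- `λ(A, B)`: the number of `x ∈ G` with `⟨A, x⟩` in the `Aut G`-orbit of `B`. -/
noncomputable def lambdaConst {G : Type*} [Group G] (A B : Subgroup G) : ℕ :=
  Nat.card {x : G // inAutOrbit (A ⊔ Subgroup.closure {x}) B}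

/-- Two `m`-tuples are orbit-equivalent if their nested subgroups are in the same
`Aut G`-orbits. -/
def orbitEquiv {G : Type*} [Group G] {m : ℕ} (a b : Fin m → G) : Prop :=
  ∀ i ≤ m, inAutOrbit (nestedSubgroup a i) (nestedSubgroup b i)


section AuxLemmas
variable {G : Type*} [Group G]

lemma map_mulAut_mul (φ ψ : MulAut G) (B : Subgroup G) :
    Subgroup.map (φ * ψ).toMonoidHom B =
      Subgroup.map φ.toMonoidHom (Subgroup.map ψ.toMonoidHom B) := by
  rw [Subgroup.map_map]; rfl

lemma map_inv_map (φ : MulAut G) (B : Subgroup G) :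
    Subgroup.map φ⁻¹.toMonoidHom (Subgroup.map φ.toMonoidHom B) = B := by
  rw [Subgroup.map_map]
  convert Subgroup.map_id B using 2
  ext x; simp

lemma inAutOrbit_refl (A : Subgroup G) : inAutOrbit A A :=
  ⟨1, by ext x; simp⟩

lemma inAutOrbit_symm {A B : Subgroup G} (h : inAutOrbit A B) : inAutOrbit B A := by
  obtain ⟨φ, hφ⟩ := h
  exact ⟨φ⁻¹, by rw [← hφ, map_inv_map]⟩

lemma inAutOrbit_trans {A B C : Subgroup G} (h1 : inAutOrbit A B) (h2 : inAutOrbit B C) :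
    inAutOrbit A C := by
  obtain ⟨φ, hφ⟩ := h1; obtain ⟨ψ, hψ⟩ := h2
  exact ⟨φ * ψ, by rw [map_mulAut_mul, hψ, hφ]⟩

lemma inAutOrbit_map_left (φ : MulAut G) {C B : Subgroup G} :
    inAutOrbit (Subgroup.map φ.toMonoidHom C) B ↔ inAutOrbit C B := by
  constructor
  · rintro ⟨ψ, hψ⟩
    exact ⟨φ⁻¹ * ψ, by rw [map_mulAut_mul, hψ, map_inv_map]⟩
  · rintro ⟨ψ, hψ⟩
    exact ⟨φ * ψ, by rw [map_mulAut_mul, hψ]⟩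

lemma inAutOrbit_congr_right {B B' : Subgroup G} (hB : inAutOrbit B B') (X : Subgroup G) :
    inAutOrbit X B ↔ inAutOrbit X B' :=
  ⟨fun h => inAutOrbit_trans h hB, fun h => inAutOrbit_trans h (inAutOrbit_symm hB)⟩

lemma lambdaConst_congr {A A' B B' : Subgroup G} (hA : inAutOrbit A A') (hB : inAutOrbit B B') :
    lambdaConst A B = lambdaConst A' B' := by
  obtain ⟨φ, hφ⟩ := hA
  unfold lambdaConst
  refine Nat.card_congr (Equiv.subtypeEquiv φ.toEquiv.symm ?_)
  intro x
  rw [inAutOrbit_congr_right hB]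
  have h2 : A ⊔ Subgroup.closure {x} =
      Subgroup.map φ.toMonoidHom (A' ⊔ Subgroup.closure {(φ.toEquiv.symm x : G)}) := by
    rw [Subgroup.map_sup, hφ, MonoidHom.map_closure, Set.image_singleton]
    simp
  rw [h2, inAutOrbit_map_left]

lemma subgroup_map_eq_top {φ : MulAut G} {B : Subgroup G}
    (h : Subgroup.map φ.toMonoidHom B = ⊤) : B = ⊤ := by
  have h2 := Subgroup.comap_map_eq_self_of_injective (f := φ.toMonoidHom) φ.injective B
  rw [h, Subgroup.comap_top] at h2
  exact h2.symm

lemma nestedSubgroup_congr {m : ℕ} {a b : Fin m → G} (i : ℕ)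
    (h : ∀ j : Fin m, (j : ℕ) < i → a j = b j) :
    nestedSubgroup a i = nestedSubgroup b i := by
  induction i with
  | zero => rfl
  | succ i ih =>
    have hi := ih (fun j hj => h j (Nat.lt_succ_of_lt hj))
    unfold nestedSubgroup
    split_ifs with hlt
    · rw [hi, h ⟨i, hlt⟩ (Nat.lt_succ_self i)]
    · exact hi

lemma card_subtype_eq_sum {α : Type*} [Fintype α] (p : α → Prop) [DecidablePred p] :
    Nat.card {x // p x} = ∑ x : α, if p x then 1 else 0 := by
  rw [Nat.card_eq_fintype_card, Fintype.card_subtype, Finset.card_filter]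

open Classical in
lemma step_count {m : ℕ} [Fintype G] (A : ℕ → Subgroup G) {k : ℕ} (hk : k < m) :
    Fintype.card G *
        Nat.card {b : Fin m → G // ∀ i ≤ k + 1, inAutOrbit (A i) (nestedSubgroup b i)} =
      lambdaConst (A k) (A (k + 1)) *
        Nat.card {b : Fin m → G // ∀ i ≤ k, inAutOrbit (A i) (nestedSubgroup b i)} := by
  classical
  set kf : Fin m := ⟨k, hk⟩ with hkf
  set e := Equiv.funSplitAt kf G with he
  set c : ({j : Fin m // j ≠ kf} → G) → (Fin m → G) := fun g => e.symm (1, g) with hc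
  have hne : ∀ (x : G) (g : {j : Fin m // j ≠ kf} → G) (j : Fin m) (hj : j ≠ kf),
      e.symm (x, g) j = g ⟨j, hj⟩ := by
    intro x g j hj
    simp [he, Equiv.funSplitAt_symm_apply, hj]
  have hat : ∀ (x : G) (g : {j : Fin m // j ≠ kf} → G), e.symm (x, g) kf = x := by
    intro x g; simp [he, Equiv.funSplitAt_symm_apply]
  have hlow : ∀ (x : G) (g : {j : Fin m // j ≠ kf} → G) (i : ℕ), i ≤ k →
      nestedSubgroup (e.symm (x, g)) i = nestedSubgroup (c g) i := by
    intro x g i hi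
    apply nestedSubgroup_congr
    intro j hj
    have hj' : j ≠ kf := by
      intro hh
      rw [hh] at hj
      simp only [hkf] at hj
      omega
    rw [hne x g j hj', hc]
    simp only
    rw [hne 1 g j hj']
  have hsucc : ∀ (x : G) (g : {j : Fin m // j ≠ kf} → G),
      nestedSubgroup (e.symm (x, g)) (k + 1) =
        nestedSubgroup (c g) k ⊔ Subgroup.closure {x} := by
    intro x g
    show (if h : k < m then nestedSubgroup (e.symm (x, g)) k ⊔
        Subgroup.closure {e.symm (x, g) ⟨k, h⟩} else nestedSubgroup (e.symm (x, g)) k) = _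
    rw [dif_pos hk, hlow x g k le_rfl, ← hkf, hat x g]
  have key : ∀ (x : G) (g : {j : Fin m // j ≠ kf} → G),
      (∀ i ≤ k + 1, inAutOrbit (A i) (nestedSubgroup (e.symm (x, g)) i)) ↔
        ((∀ i ≤ k, inAutOrbit (A i) (nestedSubgroup (c g) i)) ∧
          inAutOrbit (A (k + 1)) (nestedSubgroup (c g) k ⊔ Subgroup.closure {x})) := by
    intro x g
    constructor
    · intro h
      refine ⟨fun i hi => ?_, ?_⟩
      · rw [← hlow x g i hi]; exact h i (hi.trans (Nat.le_succ k))
      · rw [← hsucc x g]; exact h (k + 1) le_rfl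
    · rintro ⟨h1, h2⟩ i hi
      rcases Nat.eq_or_lt_of_le hi with hi' | hi'
      · subst hi'; rw [hsucc x g]; exact h2
      · have hik : i ≤ k := Nat.lt_succ_iff.mp hi'
        rw [hlow x g i hik]; exact h1 i hik
  calc Fintype.card G *
        Nat.card {b : Fin m → G // ∀ i ≤ k + 1, inAutOrbit (A i) (nestedSubgroup b i)}
      = Fintype.card G * ∑ x : G, ∑ g : {j : Fin m // j ≠ kf} → G,
          (if ∀ i ≤ k + 1, inAutOrbit (A i) (nestedSubgroup (e.symm (x, g)) i) then 1 else 0) := by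
        rw [card_subtype_eq_sum (fun b : Fin m → G => ∀ i ≤ k + 1,
          inAutOrbit (A i) (nestedSubgroup b i)),
          ← Equiv.sum_comp e.symm (fun b : Fin m → G =>
            if ∀ i ≤ k + 1, inAutOrbit (A i) (nestedSubgroup b i) then 1 else 0),
          Fintype.sum_prod_type]
    _ = Fintype.card G * ∑ g : {j : Fin m // j ≠ kf} → G, ∑ x : G,
          (if (∀ i ≤ k, inAutOrbit (A i) (nestedSubgroup (c g) i)) ∧
            inAutOrbit (A (k + 1)) (nestedSubgroup (c g) k ⊔ Subgroup.closure {x})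
            then 1 else 0) := by
        rw [Finset.sum_comm]
        congr 1
        refine Finset.sum_congr rfl fun g _ => Finset.sum_congr rfl fun x _ => ?_
        exact if_congr (key x g) rfl rfl
    _ = Fintype.card G * ∑ g : {j : Fin m // j ≠ kf} → G,
          (if (∀ i ≤ k, inAutOrbit (A i) (nestedSubgroup (c g) i)) then
            lambdaConst (A k) (A (k + 1)) else 0) := by
        congr 1
        refine Finset.sum_congr rfl fun g _ => ?_
        by_cases hP : ∀ i ≤ k, inAutOrbit (A i) (nestedSubgroup (c g) i)
        · rw [if_pos hP]
          have hlam : lambdaConst (A k) (A (k + 1)) =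
              lambdaConst (nestedSubgroup (c g) k) (A (k + 1)) :=
            lambdaConst_congr (hP k le_rfl) (inAutOrbit_refl _)
          rw [hlam, lambdaConst, card_subtype_eq_sum]
          refine Finset.sum_congr rfl fun x _ => ?_
          refine if_congr ?_ rfl rfl
          rw [and_iff_right hP]
          exact ⟨inAutOrbit_symm, inAutOrbit_symm⟩
        · rw [if_neg hP]
          apply Finset.sum_eq_zero
          intro x _
          rw [if_neg]
          exact fun h => hP h.1
    _ = lambdaConst (A k) (A (k + 1)) *
          ∑ g : {j : Fin m // j ≠ kf} → G, ∑ x : G,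
            (if ∀ i ≤ k, inAutOrbit (A i) (nestedSubgroup (c g) i) then 1 else 0) := by
        rw [Finset.mul_sum, Finset.mul_sum]
        refine Finset.sum_congr rfl fun g _ => ?_
        rw [Finset.sum_const, Finset.card_univ, smul_eq_mul]
        by_cases hP : ∀ i ≤ k, inAutOrbit (A i) (nestedSubgroup (c g) i)
        · rw [if_pos hP, if_pos hP, mul_one, mul_comm]
        · rw [if_neg hP, if_neg hP, mul_zero, mul_zero]
    _ = lambdaConst (A k) (A (k + 1)) *
          Nat.card {b : Fin m → G // ∀ i ≤ k, inAutOrbit (A i) (nestedSubgroup b i)} := by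
        congr 1
        rw [card_subtype_eq_sum (fun b : Fin m → G => ∀ i ≤ k,
          inAutOrbit (A i) (nestedSubgroup b i)),
          ← Equiv.sum_comp e.symm (fun b : Fin m → G =>
            if ∀ i ≤ k, inAutOrbit (A i) (nestedSubgroup b i) then 1 else 0),
          Fintype.sum_prod_type, Finset.sum_comm]
        refine Finset.sum_congr rfl fun x _ => Finset.sum_congr rfl fun g _ => ?_
        refine if_congr ?_ rfl rfl
        constructor
        · intro h i hi; rw [hlow x g i hi]; exact h i hi
        · intro h i hi; rw [← hlow x g i hi]; exact h i hi

lemma card_orbit_class {m : ℕ} [Fintype G] (a : Fin m → G) :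
    ∀ k ≤ m,
      Nat.card {b : Fin m → G // ∀ i ≤ k,
          inAutOrbit (nestedSubgroup a i) (nestedSubgroup b i)} * Fintype.card G ^ k =
        (∏ i ∈ Finset.range k,
          lambdaConst (nestedSubgroup a i) (nestedSubgroup a (i + 1))) *
          Fintype.card G ^ m := by
  intro k
  induction k with
  | zero =>
    intro _
    have hall : ∀ b : Fin m → G, ∀ i ≤ 0,
        inAutOrbit (nestedSubgroup a i) (nestedSubgroup b i) := by
      intro b i hi
      have h0 : i = 0 := Nat.le_zero.mp hi
      subst h0
      exact inAutOrbit_refl ⊥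
    have h1 : Nat.card {b : Fin m → G // ∀ i ≤ 0,
        inAutOrbit (nestedSubgroup a i) (nestedSubgroup b i)} = Fintype.card G ^ m := by
      rw [Nat.card_congr (Equiv.subtypeUnivEquiv hall)]
      classical
      rw [Nat.card_eq_fintype_card, Fintype.card_fun, Fintype.card_fin]
    rw [h1]
    simp
  | succ k ih =>
    intro hk1
    have hk : k < m := hk1
    have ihk := ih (Nat.le_of_lt hk)
    have hstep := step_count (G := G) (nestedSubgroup a) hk
    have hre : Nat.card {b : Fin m → G // ∀ i ≤ k + 1,
          inAutOrbit (nestedSubgroup a i) (nestedSubgroup b i)} * Fintype.card G ^ (k + 1) =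
        (Fintype.card G * Nat.card {b : Fin m → G // ∀ i ≤ k + 1,
          inAutOrbit (nestedSubgroup a i) (nestedSubgroup b i)}) * Fintype.card G ^ k := by
      ring
    rw [hre, hstep, Finset.prod_range_succ, mul_assoc, ihk]
    ring

lemma card_orbitEquiv {m : ℕ} [Fintype G] (a : Fin m → G) :
    Nat.card {b : Fin m → G // orbitEquiv a b} =
      ∏ i ∈ Finset.range m, lambdaConst (nestedSubgroup a i) (nestedSubgroup a (i + 1)) := by
  have h := card_orbit_class a m le_rfl
  have hpos : 0 < Fintype.card G ^ m := pow_pos Fintype.card_pos m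
  exact Nat.eq_of_mul_eq_mul_right hpos h

end AuxLemmas

/-- If `R` contains exactly one representative of each orbit-equivalence class of
generating `m`-tuples, then `|gen_m G| = ∑_{a ∈ R} ∏_{i<m} λ(A_i, A_{i+1})`, and hence
the probability that `m` random elements generate `G` is this sum divided by `|G|^m`. -/
theorem card_generating_tuples_eq_sum_over_reps {G : Type*} [Group G] [Fintype G]
    [DecidableEq G] {m : ℕ} (R : Finset (Fin m → G))
    (hRgen : ∀ a ∈ R, nestedSubgroup a m = ⊤)
    (hRrep : ∀ b : Fin m → G, nestedSubgroup b m = ⊤ →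
      ∃! a, a ∈ R ∧ orbitEquiv a b) :
    (Nat.card {a : Fin m → G // nestedSubgroup a m = ⊤} =
        ∑ a ∈ R, ∏ i ∈ Finset.range m,
          lambdaConst (nestedSubgroup a i) (nestedSubgroup a (i + 1))) ∧
      ((Nat.card {a : Fin m → G // nestedSubgroup a m = ⊤} : ℚ) / (Fintype.card G) ^ m =
        (∑ a ∈ R, ∏ i ∈ Finset.range m,
          (lambdaConst (nestedSubgroup a i) (nestedSubgroup a (i + 1)) : ℚ)) /
            (Fintype.card G) ^ m) := by
  classical
  have h1 : Nat.card {a : Fin m → G // nestedSubgroup a m = ⊤} =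
      ∑ a ∈ R, ∏ i ∈ Finset.range m,
        lambdaConst (nestedSubgroup a i) (nestedSubgroup a (i + 1)) := by
    have hsum : Nat.card {b : Fin m → G // nestedSubgroup b m = ⊤} =
        ∑ a ∈ R, Nat.card {b : Fin m → G // orbitEquiv a b} := by
      rw [card_subtype_eq_sum (fun b : Fin m → G => nestedSubgroup b m = ⊤)]
      calc ∑ b : Fin m → G, (if nestedSubgroup b m = ⊤ then 1 else 0)
          = ∑ b : Fin m → G, ∑ a ∈ R, (if orbitEquiv a b then 1 else 0) := by
            refine Finset.sum_congr rfl fun b _ => ?_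
            by_cases hb : nestedSubgroup b m = ⊤
            · rw [if_pos hb]
              obtain ⟨a0, ⟨ha0R, ha0e⟩, huniq⟩ := hRrep b hb
              rw [Finset.sum_eq_single a0]
              · rw [if_pos ha0e]
              · intro a haR hane
                rw [if_neg]
                exact fun hae => hane (huniq a ⟨haR, hae⟩)
              · intro h; exact absurd ha0R h
            · rw [if_neg hb, eq_comm]
              apply Finset.sum_eq_zero
              intro a haR
              rw [if_neg]
              intro hae
              obtain ⟨φ, hφ⟩ := hae m le_rfl
              rw [hRgen a haR] at hφ
              exact hb (subgroup_map_eq_top hφ)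
        _ = ∑ a ∈ R, ∑ b : Fin m → G, (if orbitEquiv a b then 1 else 0) := Finset.sum_comm
        _ = ∑ a ∈ R, Nat.card {b : Fin m → G // orbitEquiv a b} := by
            exact Finset.sum_congr rfl fun a _ => (card_subtype_eq_sum _).symm
    rw [hsum]
    exact Finset.sum_congr rfl fun a _ => card_orbitEquiv a
  refine ⟨h1, ?_⟩
  rw [h1]
  norm_cast
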